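/- For every well-founded relation R on a set A, there exists a set B with a well-founded extensional relation S on B and a surjection g : A → B such that for all x ∈ A and z ∈ B: S z (g x) holds if and only if there exists y ∈ A with z = g(y) and R y x. Moreover S is uniquely determined up to isomorphism by R. -/
import Mathlib

section CollapseAux

variable {A : Type} {R : A → A → Prop}

/-- The collapsing bisimulation: `x ≈ y` iff their `R`-predecessors match up. -/
def collapseE (hwf : WellFounded R) : A → A → Prop :=
  hwf.fix (fun x IH y =>
    (∀ z, ∀ h : R z x, ∃ w, R w y ∧ IH z h w) ∧
    (∀ w, R w y → ∃ z, ∃ h : R z x, IH z h w))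

lemma collapseE_iff (hwf : WellFounded R) (x y : A) :
    collapseE hwf x y ↔
      ((∀ z, R z x → ∃ w, R w y ∧ collapseE hwf z w) ∧
       (∀ w, R w y → ∃ z, R z x ∧ collapseE hwf z w)) := by
  unfold collapseE
  rw [WellFounded.fix_eq]
  constructor
  · rintro ⟨h1, h2⟩
    exact ⟨fun z hz => h1 z hz, fun w hw => by
      obtain ⟨z, hz, e⟩ := h2 w hw; exact ⟨z, hz, e⟩⟩
  · rintro ⟨h1, h2⟩
    exact ⟨fun z hz => h1 z hz, fun w hw => by
      obtain ⟨z, hz, e⟩ := h2 w hw; exact ⟨z, hz, e⟩⟩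

lemma collapseE_refl (hwf : WellFounded R) : ∀ x, collapseE hwf x x := fun x =>
  hwf.induction (C := fun x => collapseE hwf x x) x fun x IH => (collapseE_iff hwf x x).2
    ⟨fun z hz => ⟨z, hz, IH z hz⟩, fun z hz => ⟨z, hz, IH z hz⟩⟩

lemma collapseE_symm (hwf : WellFounded R) :
    ∀ x y, collapseE hwf x y → collapseE hwf y x := fun x =>
  hwf.induction (C := fun x => ∀ y, collapseE hwf x y → collapseE hwf y x) x
    (fun x IH y hxy => by
      obtain ⟨h1, h2⟩ := (collapseE_iff hwf x y).1 hxy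
      refine (collapseE_iff hwf y x).2 ⟨?_, ?_⟩
      · intro w hw
        obtain ⟨z, hz, e⟩ := h2 w hw
        exact ⟨z, hz, IH z hz w e⟩
      · intro z hz
        obtain ⟨w, hw, e⟩ := h1 z hz
        exact ⟨w, hw, IH z hz w e⟩)

lemma collapseE_trans (hwf : WellFounded R) :
    ∀ x y z, collapseE hwf x y → collapseE hwf y z → collapseE hwf x z := fun x =>
  hwf.induction
    (C := fun x => ∀ y z, collapseE hwf x y → collapseE hwf y z → collapseE hwf x z) x
    (fun x IH y z hxy hyz => by
      obtain ⟨h1, h2⟩ := (collapseE_iff hwf x y).1 hxy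
      obtain ⟨k1, k2⟩ := (collapseE_iff hwf y z).1 hyz
      refine (collapseE_iff hwf x z).2 ⟨?_, ?_⟩
      · intro a ha
        obtain ⟨b, hb, eab⟩ := h1 a ha
        obtain ⟨c, hc, ebc⟩ := k1 b hb
        exact ⟨c, hc, IH a ha b c eab ebc⟩
      · intro c hc
        obtain ⟨b, hb, ebc⟩ := k2 c hc
        obtain ⟨a, ha, eab⟩ := h2 b hb
        exact ⟨a, ha, IH a ha b c eab ebc⟩)

end CollapseAux

/-- Collapsing Lemma: every well-founded relation `R` on a set `A` collapses
onto a well-founded extensional relation `S` via a surjection `g` such that the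
`S`-predecessors of `g x` are exactly the images of the `R`-predecessors of
`x`; moreover `S` is unique up to isomorphism. -/
theorem collapsing_lemma (A : Type) (R : A → A → Prop) (hwf : WellFounded R) :
    ∃ (B : Type) (S : B → B → Prop) (g : A → B),
      WellFounded S ∧
      (∀ b₁ b₂ : B, (∀ z : B, S z b₁ ↔ S z b₂) → b₁ = b₂) ∧
      Function.Surjective g ∧
      (∀ (x : A) (z : B), S z (g x) ↔ ∃ y : A, z = g y ∧ R y x) ∧
      (∀ (B' : Type) (S' : B' → B' → Prop) (g' : A → B'),
        WellFounded S' →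
        (∀ b₁ b₂ : B', (∀ z : B', S' z b₁ ↔ S' z b₂) → b₁ = b₂) →
        Function.Surjective g' →
        (∀ (x : A) (z : B'), S' z (g' x) ↔ ∃ y : A, z = g' y ∧ R y x) →
        ∃ h : B ≃ B', ∀ z w : B, S z w ↔ S' (h z) (h w)) := by
  set E := collapseE hwf with hE
  let s : Setoid A := ⟨E, collapseE_refl hwf, fun {a b} h => collapseE_symm hwf a b h,
    fun {a b c} h1 h2 => collapseE_trans hwf a b c h1 h2⟩
  refine ⟨Quotient s, fun b₁ b₂ => ∃ z x, b₁ = Quotient.mk s z ∧ b₂ = Quotient.mk s x ∧ R z x,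
    Quotient.mk s, ?_, ?_, ?_, ?_, ?_⟩
  -- well-founded
  · constructor
    intro b
    induction b using Quotient.ind with
    | _ x =>
      induction x using WellFounded.induction hwf with
      | _ x IH =>
        constructor
        rintro b ⟨z', x', hz, hx, hR⟩
        have exx' : E x x' := Quotient.exact hx
        obtain ⟨w, hw, ezw⟩ :=
          ((collapseE_iff hwf x' x).1 (collapseE_symm hwf x x' exx')).1 z' hR
        have : b = Quotient.mk s w := hz.trans (Quotient.sound ezw)
        rw [this]
        exact IH w hw
  -- extensional
  · intro b₁ b₂ hb
    induction b₁ using Quotient.ind with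
    | _ x =>
    induction b₂ using Quotient.ind with
    | _ y =>
      refine Quotient.sound ?_
      refine (collapseE_iff hwf x y).2 ⟨?_, ?_⟩
      · intro z hz
        obtain ⟨z', y', h1, h2, hR⟩ := (hb (Quotient.mk s z)).1 ⟨z, x, rfl, rfl, hz⟩
        have ezz' : E z z' := Quotient.exact h1
        have eyy' : E y y' := Quotient.exact h2
        obtain ⟨w, hw, ez'w⟩ :=
          ((collapseE_iff hwf y' y).1 (collapseE_symm hwf y y' eyy')).1 z' hR
        exact ⟨w, hw, collapseE_trans hwf z z' w ezz' ez'w⟩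
      · intro w hw
        obtain ⟨w', x', h1, h2, hR⟩ := (hb (Quotient.mk s w)).2 ⟨w, y, rfl, rfl, hw⟩
        have eww' : E w w' := Quotient.exact h1
        have exx' : E x x' := Quotient.exact h2
        obtain ⟨z, hz, ew'z⟩ :=
          ((collapseE_iff hwf x' x).1 (collapseE_symm hwf x x' exx')).1 w' hR
        exact ⟨z, hz, collapseE_symm hwf w z
          (collapseE_trans hwf w w' z eww' ew'z)⟩
  -- surjective
  · exact Quotient.mk''_surjective
  -- key property
  · intro x z
    constructor
    · rintro ⟨z', x', hz, hx, hR⟩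
      have exx' : E x x' := Quotient.exact hx
      obtain ⟨w, hw, ezw⟩ :=
        ((collapseE_iff hwf x' x).1 (collapseE_symm hwf x x' exx')).1 z' hR
      exact ⟨w, hz.trans (Quotient.sound ezw), hw⟩
    · rintro ⟨y, hy, hR⟩
      exact ⟨y, x, hy, rfl, hR⟩
  -- uniqueness
  · intro B' S' g' hwf' hext' hsurj' hkey'
    have key1 : ∀ x y, E x y → g' x = g' y := fun x =>
      hwf.induction (C := fun x => ∀ y, E x y → g' x = g' y) x
        (fun x IH y hxy => by
          obtain ⟨h1, h2⟩ := (collapseE_iff hwf x y).1 hxy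
          refine hext' (g' x) (g' y) fun z' => ?_
          constructor
          · intro hz'
            obtain ⟨a, ha, hax⟩ := (hkey' x z').1 hz'
            obtain ⟨w, hw, eaw⟩ := h1 a hax
            exact (hkey' y z').2 ⟨w, ha.trans (IH a hax w eaw), hw⟩
          · intro hz'
            obtain ⟨b, hb, hby⟩ := (hkey' y z').1 hz'
            obtain ⟨a, ha, eab⟩ := h2 b hby
            exact (hkey' x z').2 ⟨a, hb.trans (IH a ha b eab).symm, ha⟩)
    have key2 : ∀ x y, g' x = g' y → E x y := fun x =>
      hwf.induction (C := fun x => ∀ y, g' x = g' y → E x y) x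
        (fun x IH y hxy => by
          refine (collapseE_iff hwf x y).2 ⟨?_, ?_⟩
          · intro z hz
            have : S' (g' z) (g' y) := by
              rw [← hxy]; exact (hkey' x (g' z)).2 ⟨z, rfl, hz⟩
            obtain ⟨w, hw, hwy⟩ := (hkey' y (g' z)).1 this
            exact ⟨w, hwy, IH z hz w hw⟩
          · intro w hw
            have : S' (g' w) (g' x) := by
              rw [hxy]; exact (hkey' y (g' w)).2 ⟨w, rfl, hw⟩
            obtain ⟨z, hz, hzx⟩ := (hkey' x (g' w)).1 this
            exact ⟨z, hzx, IH z hzx w hz.symm⟩)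
    let h0 : Quotient s → B' := Quotient.lift g' key1
    have hinj : Function.Injective h0 := by
      intro b₁ b₂
      induction b₁ using Quotient.ind with
      | _ x =>
      induction b₂ using Quotient.ind with
      | _ y =>
        intro h
        exact Quotient.sound (key2 x y h)
    have hsurj0 : Function.Surjective h0 := by
      intro b'
      obtain ⟨x, hx⟩ := hsurj' b'
      exact ⟨Quotient.mk s x, hx⟩
    refine ⟨Equiv.ofBijective h0 ⟨hinj, hsurj0⟩, ?_⟩
    intro z w
    induction z using Quotient.ind with
    | _ a =>
    induction w using Quotient.ind with
    | _ b =>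
      show _ ↔ S' (g' a) (g' b)
      constructor
      · rintro ⟨z', x', h1, h2, hR⟩
        have : S' (g' z') (g' x') := (hkey' x' (g' z')).2 ⟨z', rfl, hR⟩
        rwa [key1 z' a (collapseE_symm hwf a z' (Quotient.exact h1)),
          key1 x' b (collapseE_symm hwf b x' (Quotient.exact h2))] at this
      · intro hS
        obtain ⟨y, hy, hR⟩ := (hkey' b (g' a)).1 hS
        exact ⟨y, b, Quotient.sound (key2 a y hy), rfl, hR⟩
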